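/- Binary-binary local confluence for RSLR: if t is well typed, t → v₁,v₂ and t → z₁,z₂ with {v₁,v₂} ≠ {z₁,z₂}, then there exist a₁,a₂,a₃,a₄ with v₁ → a₁,a₂ and v₂ → a₃,a₄, and there exists i ∈ {1,2} such that z_i → a₁,a₃ and z_{3−i} → a₂,a₄. -/

import Mathlib

/-- Aspects of RSLR: modal □ (`box`) and non-modal ■ (`bbox`). -/
inductive Aspect | box | bbox
deriving DecidableEq, Repr

/-- Ordering on aspects: □ <: □, □ <: ■, ■ <: ■. -/
inductive AspectSub : Aspect → Aspect → Prop
  | refl (a : Aspect) : AspectSub a a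
  | boxLe : AspectSub .box .bbox

/-- RSLR types: A ::= N | aA → A. -/
inductive Ty
  | N
  | arr (a : Aspect) (A B : Ty)
deriving DecidableEq, Repr

/-- Subtyping on RSLR types. -/
inductive TySub : Ty → Ty → Prop
  | refl (A : Ty) : TySub A A
  | trans {A B C} : TySub A B → TySub B C → TySub A C
  | arr {A B C D : Ty} {a b : Aspect} :
      TySub B A → TySub C D → AspectSub b a → TySub (.arr a A C) (.arr b B D)

mutual
  /-- Positively □-free types. -/
  def posFree : Ty → Prop
    | .N => True
    | .arr .box _ _ => False
    | .arr .bbox A B => negFree A ∧ posFree B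
  /-- Negatively □-free types. -/
  def negFree : Ty → Prop
    | .N => True
    | .arr _ A B => posFree A ∧ negFree B
end

/-- A type is □-free when the modal aspect □ occurs nowhere in it. -/
def tyBoxFree : Ty → Prop
  | .N => True
  | .arr a A B => a = .bbox ∧ tyBoxFree A ∧ tyBoxFree B

/-- Terms of RSLR (with named variables). -/
inductive Term
  | var (x : ℕ)
  | num (n : ℕ)
  | s0 | s1 | pred | rand
  | app (t s : Term)
  | lam (x : ℕ) (a : Aspect) (A : Ty) (t : Term)
  | case_ (A : Ty) (t s r q : Term)
  | rec_ (A : Ty) (t s r : Term)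
deriving DecidableEq, Repr

/-- Substitution of `u` for the variable `x` in `t`. -/
def subst (t : Term) (x : ℕ) (u : Term) : Term :=
  match t with
  | .var y => if y = x then u else .var y
  | .num n => .num n
  | .s0 => .s0
  | .s1 => .s1
  | .pred => .pred
  | .rand => .rand
  | .app a b => .app (subst a x u) (subst b x u)
  | .lam y a A b => if y = x then .lam y a A b else .lam y a A (subst b x u)
  | .case_ A a b c d => .case_ A (subst a x u) (subst b x u) (subst c x u) (subst d x u)
  | .rec_ A a b c => .rec_ A (subst a x u) (subst b x u) (subst c x u)

/-- Free variables of a term. -/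
def fv : Term → List ℕ
  | .var x => [x]
  | .app a b => fv a ++ fv b
  | .lam x _ _ b => (fv b).filter (· ≠ x)
  | .case_ _ a b c d => fv a ++ fv b ++ fv c ++ fv d
  | .rec_ _ a b c => fv a ++ fv b ++ fv c
  | _ => []

def Closed (t : Term) : Prop := fv t = []

/-- Explicit terms contain no recursion. -/
def Explicit : Term → Prop
  | .rec_ _ _ _ _ => False
  | .app a b => Explicit a ∧ Explicit b
  | .lam _ _ _ b => Explicit b
  | .case_ _ a b c d => Explicit a ∧ Explicit b ∧ Explicit c ∧ Explicit d
  | _ => True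

/-- Contexts: finite lists of (variable, aspect, type) assignments. -/
abbrev Ctx := List (ℕ × Aspect × Ty)

/-- All assignments in the context are of base type N. -/
def baseCtx (Γ : Ctx) : Prop := ∀ e ∈ Γ, e.2.2 = Ty.N

/-- Every aspect in the context is below `a` (Γ <: a). -/
def ctxLe (Γ : Ctx) (a : Aspect) : Prop := ∀ e ∈ Γ, AspectSub e.2.1 a

/-- The type ■N → N of the constants S₀, S₁, P. -/
def nmArrNN : Ty := .arr .bbox .N .N

/-- RSLR typing. A judgment `Γ; Δ ⊢ t : A` of the paper (with Γ base-typed)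
is rendered as `HasType (Γ ++ Δ) t A` together with `baseCtx Γ` side conditions
where splitting matters. -/
inductive HasType : Ctx → Term → Ty → Prop
  | var {Γ : Ctx} {x a A} : (x, a, A) ∈ Γ → HasType Γ (.var x) A
  | num {Γ n} : HasType Γ (.num n) .N
  | s0 {Γ} : HasType Γ .s0 nmArrNN
  | s1 {Γ} : HasType Γ .s1 nmArrNN
  | pred {Γ} : HasType Γ .pred nmArrNN
  | rand {Γ} : HasType Γ .rand .N
  | sub {Γ t A B} : HasType Γ t A → TySub A B → HasType Γ t B
  | lam {Γ x a A B t} : HasType ((x, a, A) :: Γ) t B →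
      HasType Γ (.lam x a A t) (.arr a A B)
  | case_ {Γ Δ₁ Δ₂ Δ₃ Δ₄ : Ctx} {t s r q A} :
      baseCtx Γ →
      HasType (Γ ++ Δ₁) t .N →
      HasType (Γ ++ Δ₂) s A →
      HasType (Γ ++ Δ₃) r A →
      HasType (Γ ++ Δ₄) q A →
      tyBoxFree A →
      HasType (Γ ++ Δ₁ ++ Δ₂ ++ Δ₃ ++ Δ₄) (.case_ A t s r q) A
  | rec_ {Γ₁ Γ₂ Δ₁ Δ₂ : Ctx} {t s r A} :
      baseCtx Γ₁ → baseCtx Γ₂ →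
      HasType (Γ₁ ++ Δ₁) t .N →
      HasType (Γ₁ ++ Γ₂ ++ Δ₂) s A →
      HasType (Γ₁ ++ Γ₂) r (.arr .box .N (.arr .bbox A A)) →
      ctxLe (Γ₁ ++ Δ₁) .box →
      tyBoxFree A →
      HasType (Γ₁ ++ Γ₂ ++ Δ₁ ++ Δ₂) (.rec_ A t s r) A
  | app {Γ Δ₁ Δ₂ : Ctx} {t s a A B} :
      baseCtx Γ →
      HasType (Γ ++ Δ₁) t (.arr a A B) →
      HasType (Γ ++ Δ₂) s A →
      ctxLe (Γ ++ Δ₂) a →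
      HasType (Γ ++ Δ₁ ++ Δ₂) (.app t s) B

/-- Probabilistic one-step reduction: a term reduces to a sequence of terms,
each with equal probability. -/
inductive Step : Term → List Term → Prop
  | caseZero {A z e o} : Step (.case_ A (.num 0) z e o) [z]
  | caseEven {A n z e o} : Step (.case_ A (.num (2 * (n + 1))) z e o) [e]
  | caseOdd {A n z e o} : Step (.case_ A (.num (2 * n + 1)) z e o) [o]
  | recZero {A g f} : Step (.rec_ A (.num 0) g f) [g]
  | recSucc {A n g f} : Step (.rec_ A (.num (n + 1)) g f)
      [.app (.app f (.num (n + 1))) (.rec_ A (.num ((n + 1) / 2)) g f)]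
  | succ0 {n} : Step (.app .s0 (.num n)) [.num (2 * n)]
  | succ1 {n} : Step (.app .s1 (.num n)) [.num (2 * n + 1)]
  | predStep {n} : Step (.app .pred (.num n)) [.num (n / 2)]
  | betaN {x a t n} : Step (.app (.lam x a .N t) (.num n)) [subst t x (.num n)]
  | betaH {x a b A B t s} : Step (.app (.lam x a (.arr b A B) t) s) [subst t x s]
  | swap {x a A t s r} :
      Step (.app (.app (.lam x a A t) s) r) [.app (.lam x a A (.app t r)) s]
  | randStep : Step .rand [.num 0, .num 1]
  | appL {t s l} : Step t l → Step (.app t s) (l.map fun t' => .app t' s)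
  | appR {t s l} : Step s l → Step (.app t s) (l.map fun s' => .app t s')
  | lamC {x a A t l} : Step t l → Step (.lam x a A t) (l.map fun t' => .lam x a A t')
  | caseT {A t s r q l} : Step t l →
      Step (.case_ A t s r q) (l.map fun t' => .case_ A t' s r q)
  | caseS {A t s r q l} : Step s l →
      Step (.case_ A t s r q) (l.map fun s' => .case_ A t s' r q)
  | caseR {A t s r q l} : Step r l →
      Step (.case_ A t s r q) (l.map fun r' => .case_ A t s r' q)
  | caseQ {A t s r q l} : Step q l →
      Step (.case_ A t s r q) (l.map fun q' => .case_ A t s r q')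
  | recT {A t s r l} : Step t l →
      Step (.rec_ A t s r) (l.map fun t' => .rec_ A t' s r)

def NormalForm (t : Term) : Prop := ∀ l, ¬ Step t l

/-- The Dirac distribution on a term. -/
noncomputable def dirac (t : Term) : Term → ℝ := fun s => if s = t then 1 else 0

/-- Multistep reduction to a distribution over normal forms. -/
inductive MStep : Term → (Term → ℝ) → Prop
  | nf {t} : NormalForm t → MStep t (dirac t)
  | step {t : Term} {ts : List Term} {Ds : List (Term → ℝ)} :
      Step t ts → ts.length = Ds.length →
      (∀ p ∈ ts.zip Ds, MStep p.1 p.2) →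
      MStep t (fun s => ((Ds.map fun D => D s).sum) / (ts.length : ℝ))

/-- The relaxed multistep reduction relation ⇒, indexed by derivation size. -/
inductive MStepR : ℕ → Term → (Term → ℝ) → Prop
  | ax (t : Term) : MStepR 0 t (dirac t)
  | step {t : Term} {ts : List Term} {Ds : List (Term → ℝ)} {ks : List ℕ} :
      Step t ts → ts.length = Ds.length → Ds.length = ks.length →
      (∀ p ∈ ts.zip (Ds.zip ks), MStepR p.2.2 p.1 p.2.1) →
      MStepR (ks.foldr max 0 + 1) t (fun s => ((Ds.map fun D => D s).sum) / (ts.length : ℝ))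

/-- Size of a numeral: ⌈log₂ n⌉, taken to be at least 1. -/
def numSize (n : ℕ) : ℕ := max (Nat.clog 2 n) 1

/-- Size of a term, numerals having logarithmic size. -/
def tsize : Term → ℕ
  | .var _ => 1
  | .num n => numSize n
  | .s0 => 1 | .s1 => 1 | .pred => 1 | .rand => 1
  | .app a b => tsize a + tsize b
  | .lam _ _ _ b => tsize b + 1
  | .case_ _ a b c d => tsize a + tsize b + tsize c + tsize d + 1
  | .rec_ _ a b c => tsize a + tsize b + tsize c + 1

/-- Size of a term counting every numeral as 1. -/
def wsize : Term → ℕ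
  | .var _ => 1
  | .num _ => 1
  | .s0 => 1 | .s1 => 1 | .pred => 1 | .rand => 1
  | .app a b => wsize a + wsize b
  | .lam _ _ _ b => wsize b + 1
  | .case_ _ a b c d => wsize a + wsize b + wsize c + wsize d + 1
  | .rec_ _ a b c => wsize a + wsize b + wsize c + 1

/-- Maximum size of a numeral occurring in a term (0 if none). -/
def nsize : Term → ℕ
  | .num n => numSize n
  | .app a b => max (nsize a) (nsize b)
  | .lam _ _ _ b => nsize b
  | .case_ _ a b c d => max (max (nsize a) (nsize b)) (max (nsize c) (nsize d))
  | .rec_ _ a b c => max (nsize a) (max (nsize b) (nsize c))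
  | _ => 0

/-- Iterated application `t u₁ … u_k`. -/
def appL (t : Term) (us : List Term) : Term := us.foldl Term.app t

def IsConst : Term → Prop := fun c =>
  (∃ n, c = .num n) ∨ c = .s0 ∨ c = .s1 ∨ c = .pred ∨ c = .rand

/-- Big-step normal-form evaluation ⇓_nf for explicit closed terms of type N,
indexed by probability, result numeral, derivation size, and the list of terms
occurring in the derivation. -/
inductive Nf : Term → ℝ → ℕ → ℕ → List Term → Prop
  | num {n} : Nf (.num n) 1 n 1 [.num n]
  | rand0 : Nf .rand (1/2) 0 1 [.rand]
  | rand1 : Nf .rand (1/2) 1 1 [.rand]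
  | succ0 {t α n k l} : Nf t α n k l →
      Nf (.app .s0 t) α (2 * n) (k + 1) (.app .s0 t :: l)
  | succ1 {t α n k l} : Nf t α n k l →
      Nf (.app .s1 t) α (2 * n + 1) (k + 1) (.app .s1 t :: l)
  | pred0 {t α k l} : Nf t α 0 k l →
      Nf (.app .pred t) α 0 (k + 1) (.app .pred t :: l)
  | predS {t α n k l} : Nf t α n k l → 1 ≤ n →
      Nf (.app .pred t) α (n / 2) (k + 1) (.app .pred t :: l)
  | caseZ {A t s r q us α β m k₁ k₂ l₁ l₂} :
      Nf t α 0 k₁ l₁ → Nf (appL s us) β m k₂ l₂ →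
      Nf (appL (.case_ A t s r q) us) (α * β) m (k₁ + k₂ + 1)
        (appL (.case_ A t s r q) us :: l₁ ++ l₂)
  | caseE {A t s r q us α β n m k₁ k₂ l₁ l₂} :
      Nf t α (2 * n) k₁ l₁ → 1 ≤ n → Nf (appL r us) β m k₂ l₂ →
      Nf (appL (.case_ A t s r q) us) (α * β) m (k₁ + k₂ + 1)
        (appL (.case_ A t s r q) us :: l₁ ++ l₂)
  | caseO {A t s r q us α β n m k₁ k₂ l₁ l₂} :
      Nf t α (2 * n + 1) k₁ l₁ → Nf (appL q us) β m k₂ l₂ →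
      Nf (appL (.case_ A t s r q) us) (α * β) m (k₁ + k₂ + 1)
        (appL (.case_ A t s r q) us :: l₁ ++ l₂)
  | betaN {x a t s rs α β n m k₁ k₂ l₁ l₂} :
      Nf s α n k₁ l₁ → Nf (appL (subst t x (.num n)) rs) β m k₂ l₂ →
      Nf (appL (.app (.lam x a .N t) s) rs) (α * β) m (k₁ + k₂ + 1)
        (appL (.app (.lam x a .N t) s) rs :: l₁ ++ l₂)
  | betaH {x a b A B t s rs β n k l} :
      Nf (appL (subst t x s) rs) β n k l →
      Nf (appL (.app (.lam x a (.arr b A B) t) s) rs) β n (k + 1)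
        (appL (.app (.lam x a (.arr b A B) t) s) rs :: l)

/-- Recursion-elimination evaluation ⇓_rf, indexed by probability, result term,
derivation size, and the terms occurring in the derivation. -/
inductive Rf : Term → ℝ → Term → ℕ → List Term → Prop
  | const {c} : IsConst c → Rf c 1 c 1 [c]
  | succ0 {t α v k l} : Rf t α v k l →
      Rf (.app .s0 t) α (.app .s0 v) (k + 1) (.app .s0 t :: l)
  | succ1 {t α v k l} : Rf t α v k l →
      Rf (.app .s1 t) α (.app .s1 v) (k + 1) (.app .s1 t :: l)
  | predC {t α v k l} : Rf t α v k l →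
      Rf (.app .pred t) α (.app .pred v) (k + 1) (.app .pred t :: l)
  | caseC {A t s r q α β γ δ v z a b kt ks kr kq lt ls lr lq}
      {us cs : List Term} {εs : List ℝ} {kus : List ℕ} {lus : List (List Term)} :
      Rf t α v kt lt → Rf s β z ks ls → Rf r γ a kr lr → Rf q δ b kq lq →
      us.length = εs.length → εs.length = cs.length →
      cs.length = kus.length → kus.length = lus.length →
      (∀ p ∈ us.zip (εs.zip (cs.zip (kus.zip lus))),
        Rf p.1 p.2.1 p.2.2.1 p.2.2.2.1 p.2.2.2.2) →
      Rf (appL (.case_ A t s r q) us) (α * β * γ * δ * εs.prod)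
        (appL (.case_ A v z a b) cs) (kt + ks + kr + kq + kus.sum + 1)
        (appL (.case_ A t s r q) us :: lt ++ ls ++ lr ++ lq ++ lus.flatten)
  | recC {A t s r α β γ v z n kt kn ks lt ln ls}
      {qs bs : List Term} {δs : List ℝ} {kqs : List ℕ} {lqs : List (List Term)}
      {rres : List Term} {γs : List ℝ} {krs : List ℕ} {lrs : List (List Term)} :
      Rf t α v kt lt →
      Nf v β n kn ln →
      Rf s γ z ks ls →
      qs.length = δs.length → δs.length = bs.length →
      bs.length = kqs.length → kqs.length = lqs.length →
      (∀ p ∈ qs.zip (δs.zip (bs.zip (kqs.zip lqs))),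
        Rf p.1 p.2.1 p.2.2.1 p.2.2.2.1 p.2.2.2.2) →
      rres.length = Nat.size n → rres.length = γs.length →
      γs.length = krs.length → krs.length = lrs.length →
      (∀ p ∈ (List.range (Nat.size n)).zip (γs.zip (rres.zip (krs.zip lrs))),
        Rf (.app r (.num (n / 2 ^ p.1))) p.2.1 p.2.2.1 p.2.2.2.1 p.2.2.2.2) →
      Rf (appL (.rec_ A t s r) qs) (α * β * γ * γs.prod * δs.prod)
        (appL (rres.foldr Term.app z) bs) (kt + kn + ks + kqs.sum + krs.sum + 1)
        (appL (.rec_ A t s r) qs :: lt ++ ln ++ ls ++ lqs.flatten ++ lrs.flatten)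
  | betaBox {x t s rs α β γ z n u k₁ k₂ k₃ l₁ l₂ l₃} :
      Rf s α z k₁ l₁ → Nf z γ n k₂ l₂ →
      Rf (appL (subst t x (.num n)) rs) β u k₃ l₃ →
      Rf (appL (.app (.lam x .box .N t) s) rs) (α * γ * β) u (k₁ + k₂ + k₃ + 1)
        (appL (.app (.lam x .box .N t) s) rs :: l₁ ++ l₂ ++ l₃)
  | betaBBox {x t s rs α β γ z n u k₁ k₂ k₃ l₁ l₂ l₃} :
      Rf s α z k₁ l₁ → Nf z γ n k₂ l₂ →
      Rf (appL t rs) β u k₃ l₃ →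
      Rf (appL (.app (.lam x .bbox .N t) s) rs) (α * γ * β)
        (.app (.lam x .bbox .N u) (.num n)) (k₁ + k₂ + k₃ + 1)
        (appL (.app (.lam x .bbox .N t) s) rs :: l₁ ++ l₂ ++ l₃)
  | betaH {x a b A B t s rs β u k l} :
      Rf (appL (subst t x s) rs) β u k l →
      Rf (appL (.app (.lam x a (.arr b A B) t) s) rs) β u (k + 1)
        (appL (.app (.lam x a (.arr b A B) t) s) rs :: l)
  | lamC {x a A t β u k l} :
      Rf t β u k l →
      Rf (.lam x a A t) β (.lam x a A u) (k + 1) (.lam x a A t :: l)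
  | varC {x} {ts ss : List Term} {αs : List ℝ} {ks : List ℕ} {ls : List (List Term)} :
      ts.length = αs.length → αs.length = ss.length →
      ss.length = ks.length → ks.length = ls.length →
      (∀ p ∈ ts.zip (αs.zip (ss.zip (ks.zip ls))),
        Rf p.1 p.2.1 p.2.2.1 p.2.2.2.1 p.2.2.2.2) →
      Rf (appL (.var x) ts) αs.prod (appL (.var x) ss) (ks.sum + 1)
        (appL (.var x) ts :: ls.flatten)

/-- First-order types a₁N → … → a_kN → N. -/
def FOty : ℕ → Ty → Prop
  | 0, .N => True
  | k + 1, .arr _ .N B => FOty k B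
  | _, _ => False

/-- First-order terms of a given arity: closed, well-typed terms of
type a₁N → … → a_kN → N. -/
def IsFirstOrder (t : Term) (k : ℕ) : Prop :=
  Closed t ∧ ∃ A, HasType [] t A ∧ FOty k A

/-!
The only binary step is `rand → 0, 1`, performed under a context built from the congruence rules
of `Step`. Two different binary steps from the same term therefore fire two different occurrences
of `rand`; since contexts only descend into subterms, these occurrences sit in disjoint positions.
Each step can thus still be performed after the other, and the four terms obtained by firing both
occurrences close the diamond.
-/

/-- One layer of a congruence context of `Step`, with its hole at the position named by the
constructor (e.g. `caseS A t r q` is `case_ A t □ r q`). -/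
inductive Frame
  | appL (s : Term)
  | appR (t : Term)
  | lam (x : ℕ) (a : Aspect) (A : Ty)
  | caseT (A : Ty) (s r q : Term)
  | caseS (A : Ty) (t r q : Term)
  | caseR (A : Ty) (t s q : Term)
  | caseQ (A : Ty) (t s r : Term)
  | recT (A : Ty) (s r : Term)

namespace Frame

def plug : Frame → Term → Term
  | appL s, u => .app u s
  | appR t, u => .app t u
  | lam x a A, u => .lam x a A u
  | caseT A s r q, u => .case_ A u s r q
  | caseS A t r q, u => .case_ A t u r q
  | caseR A t s q, u => .case_ A t s u q
  | caseQ A t s r, u => .case_ A t s r u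
  | recT A s r, u => .rec_ A u s r

theorem step_plug : ∀ (f : Frame) {t : Term} {l : List Term}, Step t l →
    Step (f.plug t) (l.map f.plug)
  | appL _, _, _, h => .appL h
  | appR _, _, _, h => .appR h
  | lam _ _ _, _, _, h => .lamC h
  | caseT _ _ _ _, _, _, h => .caseT h
  | caseS _ _ _ _, _, _, h => .caseS h
  | caseR _ _ _ _, _, _, h => .caseR h
  | caseQ _ _ _ _, _, _, h => .caseQ h
  | recT _ _ _, _, _, h => .recT h

theorem plug_ne_rand (f : Frame) (u : Term) : f.plug u ≠ .rand := by
  cases f <;> simp [plug]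

/-- Two frames plugging to the same term either coincide, or have their holes in different
slots; then `F w` is `f` with the slot of `g` filled by `w`, and `G u` is `g` with the slot of `f`
filled by `u`. -/
theorem eq_or_commute_of_plug_eq {f g : Frame} {x y : Term} (h : f.plug x = g.plug y) :
    f = g ∧ x = y ∨ ∃ F G : Term → Frame, F y = f ∧ G x = g ∧
      ∀ u w, (F w).plug u = (G u).plug w := by
  cases f <;> cases g <;>
    simp only [plug, Term.app.injEq, Term.lam.injEq, Term.case_.injEq, Term.rec_.injEq,
      reduceCtorEq] at h <;>
    casesm* _ ∧ _ <;> subst_vars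
  all_goals first | exact .inl ⟨rfl, rfl⟩ | refine .inr ?_
  case appL.appR => exact ⟨(.appL ·), (.appR ·), rfl, rfl, fun _ _ => rfl⟩
  case appR.appL => exact ⟨(.appR ·), (.appL ·), rfl, rfl, fun _ _ => rfl⟩
  case caseT.caseS => exact ⟨(.caseT _ · _ _), (.caseS _ · _ _), rfl, rfl, fun _ _ => rfl⟩
  case caseT.caseR => exact ⟨(.caseT _ _ · _), (.caseR _ · _ _), rfl, rfl, fun _ _ => rfl⟩
  case caseT.caseQ => exact ⟨(.caseT _ _ _ ·), (.caseQ _ · _ _), rfl, rfl, fun _ _ => rfl⟩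
  case caseS.caseT => exact ⟨(.caseS _ · _ _), (.caseT _ · _ _), rfl, rfl, fun _ _ => rfl⟩
  case caseS.caseR => exact ⟨(.caseS _ _ · _), (.caseR _ _ · _), rfl, rfl, fun _ _ => rfl⟩
  case caseS.caseQ => exact ⟨(.caseS _ _ _ ·), (.caseQ _ _ · _), rfl, rfl, fun _ _ => rfl⟩
  case caseR.caseT => exact ⟨(.caseR _ · _ _), (.caseT _ _ · _), rfl, rfl, fun _ _ => rfl⟩
  case caseR.caseS => exact ⟨(.caseR _ _ · _), (.caseS _ _ · _), rfl, rfl, fun _ _ => rfl⟩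
  case caseR.caseQ => exact ⟨(.caseR _ _ _ ·), (.caseQ _ _ _ ·), rfl, rfl, fun _ _ => rfl⟩
  case caseQ.caseT => exact ⟨(.caseQ _ · _ _), (.caseT _ _ _ ·), rfl, rfl, fun _ _ => rfl⟩
  case caseQ.caseS => exact ⟨(.caseQ _ _ · _), (.caseS _ _ _ ·), rfl, rfl, fun _ _ => rfl⟩
  case caseQ.caseR => exact ⟨(.caseQ _ _ _ ·), (.caseR _ _ _ ·), rfl, rfl, fun _ _ => rfl⟩

end Frame

abbrev StepCtx := List Frame

namespace StepCtx

def fill (c : StepCtx) (u : Term) : Term := c.foldr Frame.plug u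

theorem step_fill_rand : ∀ c : StepCtx, Step (fill c .rand) [fill c (.num 0), fill c (.num 1)]
  | [] => .randStep
  | f :: c => f.step_plug (step_fill_rand c)

theorem commute_of_fill_rand_eq {c d : StepCtx} (h : fill c .rand = fill d .rand) (hcd : c ≠ d) :
    ∃ C D : Term → StepCtx, C .rand = c ∧ D .rand = d ∧ ∀ u w, fill (C w) u = fill (D u) w := by
  induction c generalizing d with
  | nil =>
    cases d with
    | nil => exact absurd rfl hcd
    | cons g d => exact absurd h.symm (g.plug_ne_rand _)
  | cons f c ih =>
    cases d with
    | nil => exact absurd h (f.plug_ne_rand _)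
    | cons g d =>
      rcases Frame.eq_or_commute_of_plug_eq h with ⟨rfl, hfill⟩ | ⟨F, G, rfl, rfl, hFG⟩
      · obtain ⟨C, D, rfl, rfl, hCD⟩ := ih hfill (by rintro rfl; exact hcd rfl)
        exact ⟨(f :: C ·), (f :: D ·), rfl, rfl, fun u w => congrArg f.plug (hCD u w)⟩
      · exact ⟨fun w => F (fill d w) :: c, fun u => G (fill c u) :: d, rfl, rfl,
          fun _ _ => hFG _ _⟩

theorem diamond_of_fill_rand_eq {c d : StepCtx} (h : fill c .rand = fill d .rand) (hcd : c ≠ d) :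
    ∃ a₁ a₂ a₃ a₄, Step (fill c (.num 0)) [a₁, a₂] ∧ Step (fill c (.num 1)) [a₃, a₄] ∧
      Step (fill d (.num 0)) [a₁, a₃] ∧ Step (fill d (.num 1)) [a₂, a₄] := by
  obtain ⟨C, D, rfl, rfl, hCD⟩ := commute_of_fill_rand_eq h hcd
  refine ⟨fill (D (.num 0)) (.num 0), fill (D (.num 0)) (.num 1),
    fill (D (.num 1)) (.num 0), fill (D (.num 1)) (.num 1), ?_, ?_, ?_, ?_⟩
  · simpa only [hCD] using step_fill_rand (D (.num 0))
  · simpa only [hCD] using step_fill_rand (D (.num 1))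
  · simpa only [hCD] using step_fill_rand (C (.num 0))
  · simpa only [hCD] using step_fill_rand (C (.num 1))

end StepCtx

def IsRandStep (t : Term) (l : List Term) : Prop :=
  ∃ c : StepCtx, t = StepCtx.fill c .rand ∧ l = [StepCtx.fill c (.num 0), StepCtx.fill c (.num 1)]

theorem IsRandStep.plug {t : Term} {l : List Term} (h : IsRandStep t l) (f : Frame) :
    IsRandStep (f.plug t) (l.map f.plug) := by
  obtain ⟨c, rfl, rfl⟩ := h
  exact ⟨f :: c, rfl, rfl⟩

theorem isRandStep_of_step {t : Term} {l : List Term} (h : Step t l) (hl : l.length = 2) :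
    IsRandStep t l := by
  induction h with
  | randStep => exact ⟨[], rfl, rfl⟩
  | appL _ ih => exact (ih (by simpa using hl)).plug (.appL _)
  | appR _ ih => exact (ih (by simpa using hl)).plug (.appR _)
  | lamC _ ih => exact (ih (by simpa using hl)).plug (.lam _ _ _)
  | caseT _ ih => exact (ih (by simpa using hl)).plug (.caseT _ _ _ _)
  | caseS _ ih => exact (ih (by simpa using hl)).plug (.caseS _ _ _ _)
  | caseR _ ih => exact (ih (by simpa using hl)).plug (.caseR _ _ _ _)
  | caseQ _ ih => exact (ih (by simpa using hl)).plug (.caseQ _ _ _ _)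
  | recT _ ih => exact (ih (by simpa using hl)).plug (.recT _ _ _)
  | _ => simp at hl

/-- binary-binary local confluence for two distinct binary
probabilistic steps from the same well-typed term. -/
theorem binary_binary_confluence {t v₁ v₂ z₁ z₂ : Term}
    (ht : ∃ Γ A, HasType Γ t A)
    (h1 : Step t [v₁, v₂]) (h2 : Step t [z₁, z₂])
    (hne : [v₁, v₂] ≠ [z₁, z₂] ∧ [v₁, v₂] ≠ [z₂, z₁]) :
    ∃ a₁ a₂ a₃ a₄, Step v₁ [a₁, a₂] ∧ Step v₂ [a₃, a₄] ∧
      ((Step z₁ [a₁, a₃] ∧ Step z₂ [a₂, a₄]) ∨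
       (Step z₂ [a₁, a₃] ∧ Step z₁ [a₂, a₄])) := by
  obtain ⟨c, rfl, hv⟩ := isRandStep_of_step h1 rfl
  obtain ⟨d, hcd, hz⟩ := isRandStep_of_step h2 rfl
  simp only [List.cons.injEq, and_true] at hv hz
  obtain ⟨rfl, rfl⟩ := hv
  obtain ⟨rfl, rfl⟩ := hz
  have hne_ctx : c ≠ d := by
    rintro rfl
    exact hne.1 rfl
  obtain ⟨a₁, a₂, a₃, a₄, s₁, s₂, s₃, s₄⟩ := StepCtx.diamond_of_fill_rand_eq hcd hne_ctx
  exact ⟨a₁, a₂, a₃, a₄, s₁, s₂, .inl ⟨s₃, s₄⟩⟩
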